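/- Let g : [0,1] → [0,1] be continuous with a slack Markov partition P such that each partition interval contains finitely many critical points of g, and let Q = P ∪ Crit(g). If the transition graph Γ(g,P) contains a finite Rome, then the transition graph Γ(g,Q) contains a finite Rome. -/

import Mathlib

open Set

abbrev UI := unitInterval

/-- Critical points: the endpoints together with the points near which `g` is not
strictly monotone. -/
def Crit (g : UI → UI) : Set UI :=
  {0, 1} ∪ {x | ∀ U ∈ nhds x, ¬ StrictMonoOn g U ∧ ¬ StrictAntiOn g U}

/-- Slack Markov partition for `g`. -/
def SlackPartition (g : UI → UI) (P : Set UI) : Prop :=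
  P.Countable ∧ IsClosed P ∧ MapsTo g P P ∧ g '' Crit g ⊆ P

/-- `J` is a partition interval: a connected component of the complement of `P`. -/
def IsPartInt (P : Set UI) (J : Set UI) : Prop :=
  ∃ x ∈ Pᶜ, J = connectedComponentIn Pᶜ x

/-- Infinite path in the transition graph `Γ(g,P)`. -/
def IsPath (g : UI → UI) (P : Set UI) (c : ℕ → Set UI) : Prop :=
  (∀ n, IsPartInt P (c n)) ∧ ∀ n, c (n + 1) ⊆ g '' c n

/-- The transition graph `Γ(g,P)` contains a finite Rome. -/
def FiniteRome (g : UI → UI) (P : Set UI) : Prop :=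
  ∃ R : Set (Set UI), R.Finite ∧ ∀ c : ℕ → Set UI, IsPath g P c → ∃ n, c n ∈ R

/-- There is a path of length `n` from `J` to `K` in `Γ(g,P)`;
equivalently `Aⁿ_{JK} ≥ 1`. -/
def PathFromTo (g : UI → UI) (P : Set UI) (n : ℕ) (J K : Set UI) : Prop :=
  ∃ c : ℕ → Set UI, c 0 = J ∧ c n = K ∧ (∀ i ≤ n, IsPartInt P (c i)) ∧
    ∀ i < n, c (i + 1) ⊆ g '' c i

/-- The transition matrix `A(g,P)` is irreducible. -/
def Irred (g : UI → UI) (P : Set UI) : Prop :=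
  ∀ J K, IsPartInt P J → IsPartInt P K → ∃ n > 0, PathFromTo g P n J K

/-- The transition matrix `A(g,P)` is aperiodic: for each vertex the gcd of its return
times is 1. -/
def Aperiodic (g : UI → UI) (P : Set UI) : Prop :=
  ∀ J, IsPartInt P J → ∀ d : ℕ, (∀ n, 0 < n → PathFromTo g P n J J → d ∣ n) → d = 1

/-!
Every `Q`-interval `I` lies in a unique `P`-interval `Î`. The image of `closure Î` under `g` is an
interval whose endpoints are values of `g` at extrema, i.e. at points of `P` or at critical points,
so both endpoints lie in `P`; hence `g(Î)` contains every `P`-interval it meets. Consequently a path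
`I₀ → I₁ → ⋯` in `Γ(g,Q)` lifts to the path `Î₀ → Î₁ → ⋯` in `Γ(g,P)`, which meets the Rome `R`.
So the `Q`-intervals contained in members of `R` form a Rome for `Q`. It is finite because the
`Q`-intervals inside a `P`-interval `J` are determined by their suprema, which lie in the finite
set `(J ∩ Q) ∪ {sup J}`.
-/

open Set Filter Topology

instance ConditionallyCompleteLinearOrder.toLocallyConnectedSpace {α : Type*}
    [ConditionallyCompleteLinearOrder α] [DenselyOrdered α] [TopologicalSpace α]
    [OrderTopology α] : LocallyConnectedSpace α :=
  locallyConnectedSpace_iff_connected_subsets.mpr fun _ _ hU =>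
    let ⟨_, _, _, hnhds, hsub⟩ := exists_Icc_mem_subset_of_mem_nhds hU
    ⟨_, hnhds, isPreconnected_Icc, hsub⟩

theorem Set.OrdConnected.subset_Icc_of_mem {α : Type*} [LinearOrder α] {K : Set α}
    (hK : K.OrdConnected) {y m M : α} (hy : y ∈ K) (hyI : y ∈ Icc m M) (hm : m ∉ K)
    (hM : M ∉ K) : K ⊆ Icc m M := by
  intro w hw
  constructor
  · by_contra! h
    exact hm (hK.out hw hy ⟨h.le, hyI.1⟩)
  · by_contra! h
    exact hM (hK.out hy hw ⟨hyI.2, h.le⟩)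

theorem closure_connectedComponentIn_inter_subset {α : Type*} [TopologicalSpace α] (F : Set α)
    (x : α) : closure (connectedComponentIn F x) ∩ F ⊆ connectedComponentIn F x := by
  by_cases hx : x ∈ F
  · have hpre :
        IsPreconnected (connectedComponentIn F x ∪ closure (connectedComponentIn F x) ∩ F) :=
      isPreconnected_connectedComponentIn.subset_closure subset_union_left
        (union_subset subset_closure inter_subset_left)
    exact subset_union_right.trans <| hpre.subset_connectedComponentIn
      (Or.inl (mem_connectedComponentIn hx))
      (union_subset (connectedComponentIn_subset F x) inter_subset_right)
  · simp [connectedComponentIn_eq_empty hx]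

section Suprema

variable {α : Type*} [CompleteLinearOrder α] [DenselyOrdered α] [TopologicalSpace α]
  [OrderTopology α] {F : Set α}

theorem sSup_connectedComponentIn_notMem (hF : IsOpen F) (htop : ⊤ ∉ F) {x : α} (hx : x ∈ F) :
    sSup (connectedComponentIn F x) ∉ F := by
  intro hs
  have hsI : sSup (connectedComponentIn F x) ∈ connectedComponentIn F x :=
    closure_connectedComponentIn_inter_subset F x
      ⟨sSup_mem_closure ⟨x, mem_connectedComponentIn hx⟩, hs⟩
  have : (𝓝[>] sSup (connectedComponentIn F x)).NeBot :=
    nhdsGT_neBot_of_exists_gt ⟨⊤, lt_top_iff_ne_top.mpr fun h => htop (h ▸ hs)⟩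
  obtain ⟨b, hsb, hb⟩ :=
    Filter.Eventually.exists_gt (hF.connectedComponentIn.mem_nhds hsI)
  exact hsb.not_ge (le_sSup hb)

theorem lt_sSup_connectedComponentIn (hF : IsOpen F) (htop : ⊤ ∉ F) {x y : α}
    (hy : y ∈ connectedComponentIn F x) : y < sSup (connectedComponentIn F x) := by
  have hyF := connectedComponentIn_subset F x hy
  rw [connectedComponentIn_eq hy]
  exact (le_sSup (mem_connectedComponentIn hyF)).lt_of_ne fun h =>
    sSup_connectedComponentIn_notMem hF htop hyF (h ▸ hyF)

theorem connectedComponentIn_eq_of_sSup_eq (hF : IsOpen F) (htop : ⊤ ∉ F) {x₁ x₂ : α}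
    (hx₁ : x₁ ∈ F) (hx₂ : x₂ ∈ F)
    (h : sSup (connectedComponentIn F x₁) = sSup (connectedComponentIn F x₂)) :
    connectedComponentIn F x₁ = connectedComponentIn F x₂ := by
  wlog hle : x₁ ≤ x₂ generalizing x₁ x₂
  · exact (this hx₂ hx₁ h.symm (le_of_not_ge hle)).symm
  obtain ⟨w, hw, hxw⟩ := lt_sSup_iff.mp
    (h ▸ lt_sSup_connectedComponentIn hF htop (mem_connectedComponentIn hx₂))
  exact connectedComponentIn_eq <| isPreconnected_connectedComponentIn.ordConnected.out
    (mem_connectedComponentIn hx₁) hw ⟨hle, hxw.le⟩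

theorem finite_setOf_connectedComponentIn_subset (hF : IsOpen F) (htop : ⊤ ∉ F) {J : Set α}
    (hJ : J.OrdConnected) (hfin : (J \ F).Finite) :
    {I | (∃ x ∈ F, I = connectedComponentIn F x) ∧ I ⊆ J}.Finite := by
  refine Finite.of_finite_image (f := sSup) ((hfin.insert (sSup J)).subset ?_) ?_
  · rintro _ ⟨_, ⟨⟨x, hx, rfl⟩, hIJ⟩, rfl⟩
    rcases (sSup_le_sSup hIJ).eq_or_lt with h | h
    · exact Or.inl h
    · obtain ⟨b, hb, hsb⟩ := lt_sSup_iff.mp h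
      have hxs := lt_sSup_connectedComponentIn hF htop (mem_connectedComponentIn hx)
      exact Or.inr ⟨hJ.out (hIJ (mem_connectedComponentIn hx)) hb ⟨hxs.le, hsb.le⟩,
        sSup_connectedComponentIn_notMem hF htop hx⟩
  · rintro _ ⟨⟨x₁, hx₁, rfl⟩, -⟩ _ ⟨⟨x₂, hx₂, rfl⟩, -⟩ h
    exact connectedComponentIn_eq_of_sSup_eq hF htop hx₁ hx₂ h

end Suprema

theorem StrictMonoOn.not_isLocalExtr {α β : Type*} [TopologicalSpace α] [LinearOrder α]
    [Preorder β] {f : α → β} {U : Set α} {x : α} (hf : StrictMonoOn f U) (hU : U ∈ 𝓝 x)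
    [(𝓝[<] x).NeBot] [(𝓝[>] x).NeBot] : ¬IsLocalExtr f x := by
  have hxU := mem_of_mem_nhds hU
  rintro (hmin | hmax)
  · obtain ⟨y, hyx, hyU, hy⟩ := Filter.Eventually.exists_lt (inter_mem hU hmin)
    exact (hf hyU hxU hyx).not_ge hy
  · obtain ⟨y, hxy, hyU, hy⟩ := Filter.Eventually.exists_gt (inter_mem hU hmax)
    exact (hf hxU hyU hxy).not_ge hy

theorem StrictAntiOn.not_isLocalExtr {α β : Type*} [TopologicalSpace α] [LinearOrder α]
    [Preorder β] {f : α → β} {U : Set α} {x : α} (hf : StrictAntiOn f U) (hU : U ∈ 𝓝 x)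
    [(𝓝[<] x).NeBot] [(𝓝[>] x).NeBot] : ¬IsLocalExtr f x := fun h =>
  hf.dual_right.not_isLocalExtr hU h.dual

theorem isClosed_crit (g : UI → UI) : IsClosed (Crit g) := by
  refine (toFinite _).isClosed.union (isOpen_compl_iff.mp (isOpen_iff_mem_nhds.mpr ?_))
  intro x hx
  simp only [mem_compl_iff, mem_ofPred_eq, not_forall, not_and_or, not_not] at hx
  obtain ⟨U, hU, hmono⟩ := hx
  filter_upwards [eventually_mem_nhds_iff.mpr hU] with y hy
  simp only [mem_compl_iff, mem_ofPred_eq, not_forall, not_and_or, not_not]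
  exact ⟨U, hy, hmono⟩

section Partitions

variable {g : UI → UI} {P : Set UI}

theorem mem_crit_of_isLocalExtr {x : UI} (h : IsLocalExtr g x) : x ∈ Crit g := by
  by_contra hx
  simp only [Crit, mem_union, mem_insert_iff, mem_singleton_iff, mem_ofPred_eq, not_or,
    not_forall, not_and_or, not_not] at hx
  obtain ⟨⟨hx0, hx1⟩, U, hU, hmono⟩ := hx
  have : (𝓝[<] x).NeBot := nhdsLT_neBot_of_exists_lt ⟨0, unitInterval.pos_iff_ne_zero.mpr hx0⟩
  have : (𝓝[>] x).NeBot := nhdsGT_neBot_of_exists_gt ⟨1, unitInterval.lt_one_iff_ne_one.mpr hx1⟩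
  exact hmono.elim (fun hf => hf.not_isLocalExtr hU h) (fun hf => hf.not_isLocalExtr hU h)

theorem apply_mem_of_isExtrOn_closure (hPcl : IsClosed P) (hPmap : MapsTo g P P)
    (hPcrit : g '' Crit g ⊆ P) {x z : UI} (hz : z ∈ closure (connectedComponentIn Pᶜ x))
    (hextr : IsExtrOn g (closure (connectedComponentIn Pᶜ x)) z) : g z ∈ P := by
  by_cases hzJ : z ∈ connectedComponentIn Pᶜ x
  · have hJ := hPcl.isOpen_compl.connectedComponentIn.mem_nhds hzJ
    exact hPcrit
      ⟨z, mem_crit_of_isLocalExtr (hextr.isLocalExtr (mem_of_superset hJ subset_closure)), rfl⟩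
  · exact hPmap <| not_not.mp fun hzP =>
      hzJ (closure_connectedComponentIn_inter_subset _ _ ⟨hz, hzP⟩)

theorem connectedComponentIn_subset_image (hg : Continuous g) (hPcl : IsClosed P)
    (hPmap : MapsTo g P P) (hPcrit : g '' Crit g ⊆ P) {x y : UI}
    (hy : y ∈ g '' connectedComponentIn Pᶜ x) (hyP : y ∉ P) :
    connectedComponentIn Pᶜ y ⊆ g '' connectedComponentIn Pᶜ x := by
  set J := connectedComponentIn Pᶜ x
  have hJ : J.Nonempty := image_nonempty.mp ⟨y, hy⟩
  have hK : IsCompact (closure J) := isClosed_closure.isCompact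
  obtain ⟨a, ha, hmin⟩ := hK.exists_isMinOn hJ.closure hg.continuousOn
  obtain ⟨b, hb, hmax⟩ := hK.exists_isMaxOn hJ.closure hg.continuousOn
  have hga := apply_mem_of_isExtrOn_closure hPcl hPmap hPcrit ha (Or.inl hmin)
  have hgb := apply_mem_of_isExtrOn_closure hPcl hPmap hPcrit hb (Or.inr hmax)
  obtain ⟨w, hw, rfl⟩ := hy
  have hIcc : connectedComponentIn Pᶜ (g w) ⊆ Icc (g a) (g b) :=
    isPreconnected_connectedComponentIn.ordConnected.subset_Icc_of_mem
      (mem_connectedComponentIn hyP)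
      ⟨isMinOn_iff.mp hmin w (subset_closure hw), isMaxOn_iff.mp hmax w (subset_closure hw)⟩
      (fun h => connectedComponentIn_subset _ _ h hga)
      (fun h => connectedComponentIn_subset _ _ h hgb)
  intro v hv
  obtain ⟨z, hz, rfl⟩ := isPreconnected_connectedComponentIn.closure.intermediate_value ha hb
    hg.continuousOn (hIcc hv)
  refine ⟨z, by_contra fun hzJ => connectedComponentIn_subset _ _ hv (hPmap ?_), rfl⟩
  exact not_not.mp fun hzP => hzJ (closure_connectedComponentIn_inter_subset _ _ ⟨hz, hzP⟩)

theorem exists_isPath_superset (hg : Continuous g) (hPcl : IsClosed P) (hPmap : MapsTo g P P)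
    (hPcrit : g '' Crit g ⊆ P) {Q : Set UI} (hPQ : P ⊆ Q) {c : ℕ → Set UI}
    (hc : IsPath g Q c) : ∃ ĉ, IsPath g P ĉ ∧ ∀ n, c n ⊆ ĉ n := by
  choose xs hxs hcxs using hc.1
  have hxsP n : xs n ∈ Pᶜ := compl_subset_compl.mpr hPQ (hxs n)
  have hsub n : c n ⊆ connectedComponentIn Pᶜ (xs n) :=
    hcxs n ▸ connectedComponentIn_mono _ (compl_subset_compl.mpr hPQ)
  refine ⟨fun n => connectedComponentIn Pᶜ (xs n),
    ⟨fun n => ⟨xs n, hxsP n, rfl⟩, fun n => ?_⟩, hsub⟩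
  have hxc : xs (n + 1) ∈ c (n + 1) := hcxs (n + 1) ▸ mem_connectedComponentIn (hxs (n + 1))
  exact connectedComponentIn_subset_image hg hPcl hPmap hPcrit
    (image_mono (hsub n) (hc.2 n hxc)) (hxsP (n + 1))

theorem finite_subintervals (hPcl : IsClosed P) {J : Set UI} (hJ : IsPartInt P J)
    (hfin : (Crit g ∩ J).Finite) : {I | IsPartInt (P ∪ Crit g) I ∧ I ⊆ J}.Finite := by
  obtain ⟨x, -, rfl⟩ := hJ
  refine finite_setOf_connectedComponentIn_subset (hPcl.union (isClosed_crit g)).isOpen_compl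
    (fun h => h (Or.inr (Or.inl (Or.inr rfl)))) isPreconnected_connectedComponentIn.ordConnected
    (hfin.subset ?_)
  rintro z ⟨hzJ, hzQ⟩
  rcases not_not.mp hzQ with hzP | hz
  · exact absurd hzP (connectedComponentIn_subset _ _ hzJ)
  · exact ⟨hz, hzJ⟩

end Partitions

/-- Let `g` have a slack Markov partition `P` with finitely many critical
points in each partition interval, and let `Q = P ∪ Crit(g)`. If `Γ(g,P)` contains a
finite Rome, then so does `Γ(g,Q)`. -/
theorem stmt_16 (g : UI → UI) (hg : Continuous g) (P : Set UI)
    (hP : SlackPartition g P)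
    (hfin : ∀ J, IsPartInt P J → (Crit g ∩ J).Finite)
    (hrome : FiniteRome g P) :
    FiniteRome g (P ∪ Crit g) := by
  obtain ⟨-, hPcl, hPmap, hPcrit⟩ := hP
  obtain ⟨R, hRfin, hR⟩ := hrome
  refine ⟨{I | IsPartInt (P ∪ Crit g) I ∧ ∃ J ∈ R, IsPartInt P J ∧ I ⊆ J}, ?_, fun c hc => ?_⟩
  · refine ((hRfin.inter_of_left {J | IsPartInt P J}).biUnion fun J hJ =>
      finite_subintervals hPcl hJ.2 (hfin J hJ.2)).subset ?_
    rintro I ⟨hI, J, hJR, hJ, hIJ⟩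
    exact mem_biUnion ⟨hJR, hJ⟩ ⟨hI, hIJ⟩
  · obtain ⟨ĉ, hĉ, hcĉ⟩ := exists_isPath_superset hg hPcl hPmap hPcrit subset_union_left hc
    obtain ⟨n, hn⟩ := hR ĉ hĉ
    exact ⟨n, hc.1 n, ĉ n, hn, hĉ.1 n, hcĉ n⟩
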